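/- Let S ⊆ G^n be the stabilizer group of an n-qubit stabilizer state whose generators f_1, ..., f_p each have support coverable by an l×l block of a 2D lattice on which the qubits live. Partition the lattice into three angular regions A, B, C meeting at a single junction point O. Let S' ⊆ S be generated by those f_j whose support intersects all three regions. Then dim(S') ≤ l^4, and consequently dim(S) − dim(S_loc) ≤ l^4, where S_loc = Σ_{α∈{A,B,C}} S_{α̂}. -/

import Mathlib

/-- The phase space of `ι`-indexed qubits: `G^ι = (F_2 × F_2)^ι`. -/
abbrev PV (ι : Type*) := ι → ZMod 2 × ZMod 2

/-- The standard symplectic form `ω(f,g) = Σ_j (f_j^x g_j^z + f_j^z g_j^x)`. -/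
noncomputable def sympForm (ι : Type*) [Fintype ι] :
    LinearMap.BilinForm (ZMod 2) (PV ι) :=
  LinearMap.mk₂ (ZMod 2)
    (fun f g => ∑ j, ((f j).1 * (g j).2 + (f j).2 * (g j).1))
    (fun m₁ m₂ g => by
      rw [← Finset.sum_add_distrib]
      exact Finset.sum_congr rfl fun j _ => by
        simp only [Pi.add_apply, Prod.fst_add, Prod.snd_add]; ring)
    (fun c m g => by
      simp only [Pi.smul_apply, Prod.smul_fst, Prod.smul_snd, smul_eq_mul]
      rw [Finset.mul_sum]
      exact Finset.sum_congr rfl fun j _ => by ring)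
    (fun m g₁ g₂ => by
      rw [← Finset.sum_add_distrib]
      exact Finset.sum_congr rfl fun j _ => by
        simp only [Pi.add_apply, Prod.fst_add, Prod.snd_add]; ring)
    (fun c m g => by
      simp only [Pi.smul_apply, Prod.smul_fst, Prod.smul_snd, smul_eq_mul]
      rw [Finset.mul_sum]
      exact Finset.sum_congr rfl fun j _ => by ring)

/-- The restriction of the symplectic form to the coordinates in `A`:
`ω(f_A, g_A)`. -/
def sympOn {ι : Type*} (A : Finset ι) (f g : PV ι) : ZMod 2 :=
  ∑ j ∈ A, ((f j).1 * (g j).2 + (f j).2 * (g j).1)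

/-- The set of qubits owned by party `α`. -/
def partySet {ι M : Type*} [Fintype ι] [DecidableEq M] (party : ι → M) (α : M) :
    Finset ι := Finset.univ.filter (fun j => party j = α)

/-- The local subspace `G^n_α` of vectors supported on party `α`'s qubits. -/
def localSub {ι M : Type*} (party : ι → M) (α : M) :
    Submodule (ZMod 2) (PV ι) where
  carrier := {f | ∀ j, party j ≠ α → f j = 0}
  add_mem' := fun hf hg j hj => by
    simp only [Pi.add_apply, hf j hj, hg j hj, add_zero]
  zero_mem' := fun j _ => rfl
  smul_mem' := fun c f hf j hj => by
    simp only [Pi.smul_apply, hf j hj, smul_zero]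

/-- The co-local subgroup `S_α̂` of elements of `S` acting trivially on party `α`. -/
def colocalSub {ι M : Type*} (S : Submodule (ZMod 2) (PV ι)) (party : ι → M) (α : M) :
    Submodule (ZMod 2) (PV ι) :=
  S ⊓ { carrier := {f | ∀ j, party j = α → f j = 0}
        add_mem' := fun hf hg j hj => by
          simp only [Pi.add_apply, hf j hj, hg j hj, add_zero]
        zero_mem' := fun j _ => rfl
        smul_mem' := fun c f hf j hj => by
          simp only [Pi.smul_apply, hf j hj, smul_zero] }

/-- `S_loc`, the sum of all co-local subgroups of `S`. -/
def Sloc {ι M : Type*} (S : Submodule (ZMod 2) (PV ι)) (party : ι → M) :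
    Submodule (ZMod 2) (PV ι) :=
  ⨆ α : M, colocalSub S party α

/-- The subspace `L_α = {f ∈ G^n_α : ω(f, S_loc) = 0}`. -/
noncomputable def Lsub {ι M : Type*} [Fintype ι] (S : Submodule (ZMod 2) (PV ι))
    (party : ι → M) (α : M) : Submodule (ZMod 2) (PV ι) :=
  localSub party α ⊓ LinearMap.BilinForm.orthogonal (sympForm ι) (Sloc S party)

open Module

lemma sympForm_apply {ι : Type*} [Fintype ι] (f g : PV ι) :
    sympForm ι f g = ∑ j, ((f j).1 * (g j).2 + (f j).2 * (g j).1) := rfl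

lemma sympForm_isRefl (ι : Type*) [Fintype ι] : (sympForm ι).IsRefl := by
  intro f g h
  rw [sympForm_apply] at h ⊢
  rw [← h]
  exact Finset.sum_congr rfl fun j _ => by ring

lemma sympForm_nondeg (ι : Type*) [Fintype ι] : (sympForm ι).Nondegenerate := by
  classical
  refine LinearMap.BilinForm.Nondegenerate.ofSeparatingLeft ?_
  intro f hf
  funext j
  have h1 : (f j).1 = 0 := by
    have h := hf (Pi.single j ((0 : ZMod 2), (1 : ZMod 2)))
    rw [sympForm_apply, Finset.sum_eq_single j] at h
    · simpa using h
    · intro b _ hb; simp [Pi.single_eq_of_ne hb]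
    · simp
  have h2 : (f j).2 = 0 := by
    have h := hf (Pi.single j ((1 : ZMod 2), (0 : ZMod 2)))
    rw [sympForm_apply, Finset.sum_eq_single j] at h
    · simpa using h
    · intro b _ hb; simp [Pi.single_eq_of_ne hb]
    · simp
  exact Prod.ext h1 h2

lemma finrank_PV (ι : Type*) [Fintype ι] :
    finrank (ZMod 2) (PV ι) = 2 * Fintype.card ι := by
  have h : finrank (ZMod 2) (PV ι) = ∑ _j : ι, finrank (ZMod 2) (ZMod 2 × ZMod 2) :=
    Module.finrank_pi_fintype (ZMod 2)
  rw [h]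
  simp [Module.finrank_prod, mul_comm]

lemma isotropic_finrank_le {ι : Type*} [Fintype ι] (W : Submodule (ZMod 2) (PV ι))
    (h : W ≤ (sympForm ι).orthogonal W) :
    finrank (ZMod 2) W ≤ Fintype.card ι := by
  have h1 := LinearMap.BilinForm.finrank_orthogonal (sympForm_nondeg ι) W
  have h2 : finrank (ZMod 2) W ≤ finrank (ZMod 2) ((sympForm ι).orthogonal W) :=
    Submodule.finrank_mono h
  have h3 := finrank_PV ι
  have h4 : finrank (ZMod 2) W ≤ finrank (ZMod 2) (PV ι) := Submodule.finrank_le W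
  omega

/-- Vectors supported on a finset `T`. -/
def suppSub {ι : Type*} (T : Finset ι) : Submodule (ZMod 2) (PV ι) where
  carrier := {f | ∀ j ∉ T, f j = 0}
  add_mem' := fun hf hg j hj => by
    simp only [Pi.add_apply, hf j hj, hg j hj, add_zero]
  zero_mem' := fun j _ => rfl
  smul_mem' := fun c f hf j hj => by
    simp only [Pi.smul_apply, hf j hj, smul_zero]

lemma supported_isotropic_finrank_le {ι : Type*} [Fintype ι] [DecidableEq ι]
    (T : Finset ι) (W : Submodule (ZMod 2) (PV ι))
    (hsupp : W ≤ suppSub T)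
    (hiso : W ≤ (sympForm ι).orthogonal W) :
    finrank (ZMod 2) W ≤ T.card := by
  classical
  set r : PV ι →ₗ[ZMod 2] PV {x // x ∈ T} :=
    LinearMap.funLeft (ZMod 2) (ZMod 2 × ZMod 2) Subtype.val with hr
  have hform : ∀ u v : PV ι, u ∈ suppSub T → sympForm {x // x ∈ T} (r u) (r v) =
      sympForm ι u v := by
    intro u v hu
    rw [sympForm_apply, sympForm_apply]
    have h := Finset.sum_coe_sort T (fun j => ((u j).1 * (v j).2 + (u j).2 * (v j).1))
    refine Eq.trans h (Finset.sum_subset (Finset.subset_univ T) ?_)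
    intro j _ hj
    rw [hu j hj]
    simp
  -- the map φ : W → PV T
  set φ : W →ₗ[ZMod 2] PV {x // x ∈ T} := r.comp W.subtype with hφ
  have hinj : Function.Injective φ := by
    rw [← LinearMap.ker_eq_bot]
    ext ⟨w, hw⟩
    simp only [Submodule.mem_bot, LinearMap.mem_ker, hφ, LinearMap.comp_apply,
      Submodule.coe_subtype, Submodule.mk_eq_zero]
    constructor
    · intro h
      funext j
      by_cases hj : j ∈ T
      · exact congrFun h ⟨j, hj⟩
      · exact hsupp hw j hj
    · rintro rfl; rfl
  have hrange : LinearMap.range φ = W.map r := by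
    rw [hφ, LinearMap.range_comp, Submodule.range_subtype]
  have h1 : finrank (ZMod 2) W = finrank (ZMod 2) (W.map r) := by
    rw [← hrange]; exact (LinearMap.finrank_range_of_inj hinj).symm
  have h2 : (W.map r) ≤ (sympForm {x // x ∈ T}).orthogonal (W.map r) := by
    rintro _ ⟨x, hx, rfl⟩
    rintro _ ⟨y, hy, rfl⟩
    show sympForm {x // x ∈ T} (r y) (r x) = 0
    rw [hform y x (hsupp hy)]
    exact hiso hx y hy
  have h3 := isotropic_finrank_le (W.map r) h2
  rw [Fintype.card_coe] at h3
  omega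

lemma finrank_finset_sup_le {V : Type*} [AddCommGroup V] [Module (ZMod 2) V]
    [FiniteDimensional (ZMod 2) V] {κ : Type*} [DecidableEq κ] (s : Finset κ)
    (W : κ → Submodule (ZMod 2) V) (m : ℕ)
    (hm : ∀ k ∈ s, finrank (ZMod 2) (W k) ≤ m) :
    finrank (ZMod 2) (s.sup W : Submodule (ZMod 2) V) ≤ s.card * m := by
  classical
  induction s using Finset.induction with
  | empty => simp
  | @insert a s' hk ih =>
    rw [Finset.sup_insert, Finset.card_insert_of_notMem hk]
    have h1 : finrank (ZMod 2) (W a ⊔ s'.sup W : Submodule (ZMod 2) V) ≤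
        finrank (ZMod 2) (W a) + finrank (ZMod 2) (s'.sup W : Submodule (ZMod 2) V) := by
      have := Submodule.finrank_sup_add_finrank_inf_eq (W a) (s'.sup W)
      omega
    have h2 := ih (fun k hk => hm k (Finset.mem_insert_of_mem hk))
    have h3 := hm a (Finset.mem_insert_self a s')
    calc finrank (ZMod 2) (W a ⊔ s'.sup W : Submodule (ZMod 2) V)
        ≤ finrank (ZMod 2) (W a) + finrank (ZMod 2) (s'.sup W : Submodule (ZMod 2) V) := h1
      _ ≤ m + s'.card * m := by omega
      _ = (s'.card + 1) * m := by ring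

/-- Saturation of tripartite entanglement for stabilizer groups
with geometrically local generators on a 2D lattice partitioned into three
angular regions meeting at a junction point `O`: the subgroup `S'` generated by
the generators supported on all three regions has dimension at most `l^4`, and
consequently `dim S − dim S_loc ≤ l^4`. -/
theorem lattice_ghz_saturation (n l q : ℕ) (pos : Fin n → ℤ × ℤ)
    (hinj : Function.Injective pos)
    (region : ℤ × ℤ → Fin 3) (O : ℤ × ℤ)
    -- the three regions meet at the single junction point `O`: any `l×l` block
    -- meeting all three regions contains `O`
    (hjun : ∀ a b : ℤ,
      (∀ α : Fin 3, ∃ z : ℤ × ℤ, a ≤ z.1 ∧ z.1 < a + l ∧ b ≤ z.2 ∧ z.2 < b + l ∧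
        region z = α) →
      (a ≤ O.1 ∧ O.1 < a + l ∧ b ≤ O.2 ∧ O.2 < b + l))
    (f : Fin q → PV (Fin n))
    -- each generator is supported within some `l×l` block
    (hblock : ∀ i, ∃ a b : ℤ, ∀ j, f i j ≠ 0 →
      a ≤ (pos j).1 ∧ (pos j).1 < a + l ∧ b ≤ (pos j).2 ∧ (pos j).2 < b + l)
    (S : Submodule (ZMod 2) (PV (Fin n)))
    (hS : S = Submodule.span (ZMod 2) (Set.range f))
    (hsd : S = LinearMap.BilinForm.orthogonal (sympForm (Fin n)) S)
    (S' : Submodule (ZMod 2) (PV (Fin n)))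
    -- `S'` is generated by the generators supported on all three regions
    (hS' : S' = Submodule.span (ZMod 2)
      {v | ∃ i, v = f i ∧ ∀ α : Fin 3, ∃ j, f i j ≠ 0 ∧ region (pos j) = α}) :
    Module.finrank (ZMod 2) S' ≤ l ^ 4 ∧
    Module.finrank (ZMod 2) S -
      Module.finrank (ZMod 2) (Sloc S (fun j => region (pos j))) ≤ l ^ 4 := by
  classical
  set party : Fin n → Fin 3 := fun j => region (pos j) with hparty
  set blockT : ℤ × ℤ → Finset (Fin n) := fun p =>
    Finset.univ.filter (fun j => p.1 ≤ (pos j).1 ∧ (pos j).1 < p.1 + l ∧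
      p.2 ≤ (pos j).2 ∧ (pos j).2 < p.2 + l) with hbT
  set Wb : ℤ × ℤ → Submodule (ZMod 2) (PV (Fin n)) :=
    fun p => S ⊓ suppSub (blockT p) with hWb
  set K : Finset (ℤ × ℤ) :=
    Finset.Icc (O.1 - l + 1) O.1 ×ˢ Finset.Icc (O.2 - l + 1) O.2 with hK
  have hKcard : K.card = l * l := by
    have e1 : (Finset.Icc (O.1 - l + 1) O.1).card = l := by rw [Int.card_Icc]; omega
    have e2 : (Finset.Icc (O.2 - l + 1) O.2).card = l := by rw [Int.card_Icc]; omega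
    rw [hK, Finset.card_product, e1, e2]
  have hWbrank : ∀ p ∈ K, Module.finrank (ZMod 2) (Wb p) ≤ l * l := by
    intro p _
    have hiso : Wb p ≤ (sympForm (Fin n)).orthogonal (Wb p) := by
      have h1 : Wb p ≤ S := inf_le_left
      calc Wb p ≤ S := h1
        _ ≤ (sympForm (Fin n)).orthogonal S := le_of_eq hsd
        _ ≤ (sympForm (Fin n)).orthogonal (Wb p) :=
            LinearMap.BilinForm.orthogonal_le h1
    have hcard : (blockT p).card ≤ l * l := by
      have e1 : (Finset.Icc p.1 (p.1 + l - 1)).card = l := by rw [Int.card_Icc]; omega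
      have e2 : (Finset.Icc p.2 (p.2 + l - 1)).card = l := by rw [Int.card_Icc]; omega
      have hle : (blockT p).card ≤
          ((Finset.Icc p.1 (p.1 + l - 1)) ×ˢ (Finset.Icc p.2 (p.2 + l - 1))).card := by
        apply Finset.card_le_card_of_injOn pos
        · intro j hj
          simp only [hbT, Finset.mem_coe, Finset.mem_filter, Finset.mem_univ, true_and] at hj
          simp only [Finset.mem_coe, Finset.mem_product, Finset.mem_Icc]
          omega
        · exact fun a _ b _ h => hinj h
      rwa [Finset.card_product, e1, e2] at hle
    exact le_trans
      (supported_isotropic_finrank_le (blockT p) (Wb p) inf_le_right hiso) hcard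
  have hS'le : S' ≤ (K.sup Wb : Submodule (ZMod 2) (PV (Fin n))) := by
    rw [hS']
    apply Submodule.span_le.mpr
    rintro v ⟨i, rfl, hall⟩
    obtain ⟨a, b, hab⟩ := hblock i
    have hO : a ≤ O.1 ∧ O.1 < a + l ∧ b ≤ O.2 ∧ O.2 < b + l := by
      apply hjun a b
      intro α
      obtain ⟨j, hj0, hjr⟩ := hall α
      exact ⟨pos j, (hab j hj0).1, (hab j hj0).2.1, (hab j hj0).2.2.1,
        (hab j hj0).2.2.2, hjr⟩
    have hmem : ((a, b) : ℤ × ℤ) ∈ K := by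
      simp only [hK, Finset.mem_product, Finset.mem_Icc]
      omega
    have hWle : Wb (a, b) ≤ K.sup Wb := Finset.le_sup hmem
    apply hWle
    refine Submodule.mem_inf.mpr ⟨?_, ?_⟩
    · rw [hS]; exact Submodule.subset_span ⟨i, rfl⟩
    · intro j hj
      by_contra hne
      apply hj
      simp only [hbT, Finset.mem_filter, Finset.mem_univ, true_and]
      exact hab j hne
  have part1 : Module.finrank (ZMod 2) S' ≤ l ^ 4 := by
    have h1 := finrank_finset_sup_le K Wb (l * l) hWbrank
    have h2 : Module.finrank (ZMod 2) S' ≤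
        Module.finrank (ZMod 2) (K.sup Wb : Submodule (ZMod 2) (PV (Fin n))) :=
      Submodule.finrank_mono hS'le
    have h3 : K.card * (l * l) = l ^ 4 := by rw [hKcard]; ring
    omega
  refine ⟨part1, ?_⟩
  have hsub : S ≤ Sloc S party ⊔ S' := by
    refine le_trans (le_of_eq hS) ?_
    apply Submodule.span_le.mpr
    rintro v ⟨i, rfl⟩
    by_cases hall : ∀ α : Fin 3, ∃ j, f i j ≠ 0 ∧ region (pos j) = α
    · exact Submodule.mem_sup_right (hS' ▸ Submodule.subset_span ⟨i, rfl, hall⟩)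
    · push_neg at hall
      obtain ⟨α, hα⟩ := hall
      apply Submodule.mem_sup_left
      have hmem : f i ∈ colocalSub S party α := by
        refine Submodule.mem_inf.mpr ⟨?_, ?_⟩
        · rw [hS]; exact Submodule.subset_span ⟨i, rfl⟩
        · intro j hj
          by_contra hne
          exact hα j hne hj
      exact (le_iSup (fun β => colocalSub S party β) α) hmem
  have h5 : Module.finrank (ZMod 2) S ≤
      Module.finrank (ZMod 2) (Sloc S party ⊔ S' : Submodule (ZMod 2) (PV (Fin n))) :=
    Submodule.finrank_mono hsub
  have h6 := Submodule.finrank_sup_add_finrank_inf_eq (Sloc S party) S'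
  omega
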